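/- arXiv:1210.5380 — 2 statements merged into one kernel-verified Lean document; each statement's English description precedes it below -/
import Mathlib

section
/- Let x₀, x ∈ V and R₀, ρ > 0 with ‖x − x₀‖ ≥ 2R₀ and B(x, ρ) ∩ B(x₀, R₀) ≠ ∅. Put y = x₀ + (3R₀/(2‖x − x₀‖))·(x − x₀). Then ‖y − x₀‖ = 3R₀/2 and the open ball B(y, R₀/2) is contained in B(x, ρ). -/
/-! `y` is the point of the segment `[x₀, x]` at distance `3R₀/2` from `x₀`, so
`dist y x = ‖x - x₀‖ - 3R₀/2`; since the two balls meet, `‖x - x₀‖ < ρ + R₀`, whence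
`R₀/2 + dist y x < ρ`. -/

section PointAtDistance

variable {V : Type*} [NormedAddCommGroup V] [NormedSpace ℝ V] {x₀ x : V} {t : ℝ}

theorem add_smul_sub_eq_lineMap (x₀ x : V) (c : ℝ) :
    x₀ + c • (x - x₀) = AffineMap.lineMap x₀ x c := by
  rw [AffineMap.lineMap_apply_module', add_comm]

theorem norm_add_smul_div_norm_sub_sub_self (hx : x ≠ x₀) (ht : 0 ≤ t) :
    ‖(x₀ + (t / ‖x - x₀‖) • (x - x₀)) - x₀‖ = t := by
  have hd : 0 < ‖x - x₀‖ := norm_pos_iff.mpr (sub_ne_zero.mpr hx)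
  rw [add_sub_cancel_left, norm_smul, Real.norm_of_nonneg (by positivity),
    div_mul_cancel₀ _ hd.ne']

theorem dist_add_smul_div_norm_sub (ht : 0 ≤ t) (htx : t ≤ ‖x - x₀‖) :
    dist (x₀ + (t / ‖x - x₀‖) • (x - x₀)) x = ‖x - x₀‖ - t := by
  rcases (norm_nonneg (x - x₀)).eq_or_lt with hd | hd
  · obtain rfl : x = x₀ := norm_sub_eq_zero_iff.mp hd.symm
    obtain rfl : t = 0 := by linarith
    simp
  rw [add_smul_sub_eq_lineMap, dist_lineMap_right, dist_eq_norm', Real.norm_of_nonneg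
    (sub_nonneg.mpr ((div_le_one hd).mpr htx)), sub_mul, div_mul_cancel₀ _ hd.ne', one_mul]

end PointAtDistance

theorem ball_on_segment_subset_general
    (V : Type*) [NormedAddCommGroup V] [NormedSpace ℝ V]
    (x₀ x : V) (R₀ ρ : ℝ) (hR₀ : 0 < R₀)
    (hfar : 2 * R₀ ≤ ‖x - x₀‖)
    (hmeet : (Metric.ball x ρ ∩ Metric.ball x₀ R₀).Nonempty) :
    ‖(x₀ + (3 * R₀ / (2 * ‖x - x₀‖)) • (x - x₀)) - x₀‖ = 3 * R₀ / 2 ∧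
      Metric.ball (x₀ + (3 * R₀ / (2 * ‖x - x₀‖)) • (x - x₀)) (R₀ / 2) ⊆
        Metric.ball x ρ := by
  have hx : x ≠ x₀ := sub_ne_zero.mp (norm_pos_iff.mp (by linarith))
  have hcenters : dist x x₀ < ρ + R₀ := Metric.dist_lt_add_of_nonempty_ball_inter_ball hmeet
  rw [← div_div]
  refine ⟨norm_add_smul_div_norm_sub_sub_self hx (by positivity), Metric.ball_subset_ball' ?_⟩
  rw [dist_add_smul_div_norm_sub (by positivity) (by linarith), ← dist_eq_norm]
  linarith

/-- in a real normed vector space, if `‖x − x₀‖ ≥ 2R₀` and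
`B(x,ρ) ∩ B(x₀,R₀) ≠ ∅`, then the point `y = x₀ + (3R₀ / (2‖x − x₀‖)) • (x − x₀)` satisfies
`‖y − x₀‖ = 3R₀/2` and `B(y, R₀/2) ⊆ B(x, ρ)`. -/
theorem ball_on_segment_subset
    (V : Type*) [NormedAddCommGroup V] [NormedSpace ℝ V]
    (x₀ x : V) (R₀ ρ : ℝ) (hR₀ : 0 < R₀) (hρ : 0 < ρ)
    (hfar : 2 * R₀ ≤ ‖x - x₀‖)
    (hmeet : (Metric.ball x ρ ∩ Metric.ball x₀ R₀).Nonempty) :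
    ‖(x₀ + (3 * R₀ / (2 * ‖x - x₀‖)) • (x - x₀)) - x₀‖ = 3 * R₀ / 2 ∧
      Metric.ball (x₀ + (3 * R₀ / (2 * ‖x - x₀‖)) • (x - x₀)) (R₀ / 2) ⊆
        Metric.ball x ρ :=
  ball_on_segment_subset_general V x₀ x R₀ ρ hR₀ hfar hmeet
end

section
/- Suppose that for each n ≥ 1, r_n : ℝ^d → [0,∞) is Lebesgue measurable and r_n(x) → 0 as n → ∞ for every x ∈ ℝ^d. Then ∫_{ℝ^d} ∫_{ℝ^d} f(x) f(y) 1{‖x − y‖ ≤ 3 max(r_n(x), r_n(y))} dy dx → 0 as n → ∞. -/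
/-! The diagonal of `ℝ^d × ℝ^d` is Lebesgue-null when `d ≥ 1`, and off the diagonal the
indicator `1{‖x − y‖ ≤ 3 max(r_n(x), r_n(y))}` vanishes for all large `n` because `r_n → 0`
pointwise. Dominated convergence on the product, with dominating function `|f(x) f(y)|`,
then gives the limit `0`. -/

open MeasureTheory Filter

noncomputable instance piLpMeasurableSpace (p : ENNReal) (d : ℕ) :
    MeasurableSpace (PiLp p (fun _ : Fin d => ℝ)) :=
  MeasurableSpace.comap (WithLp.ofLp (p := p)) (inferInstance : MeasurableSpace (Fin d → ℝ))

noncomputable instance piLpMeasureSpace (p : ENNReal) (d : ℕ) :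
    MeasureSpace (PiLp p (fun _ : Fin d => ℝ)) :=
  ⟨Measure.map (WithLp.toLp p) (volume : Measure (Fin d → ℝ))⟩

open Function Set Topology

theorem MeasurableEquiv.nullSingletonClass_map {α β : Type*} [MeasurableSpace α]
    [MeasurableSpace β] {μ : Measure α} [NullSingletonClass μ] (e : α ≃ᵐ β) :
    NullSingletonClass (μ.map e) where
  measure_singleton x := by
    rw [e.map_apply]
    exact (subsingleton_singleton.preimage e.injective).measure_zero μ

instance PiLp.nullSingletonClass_volume (p : ENNReal) (d : ℕ) [NeZero d] :
    NullSingletonClass (volume : Measure (PiLp p (fun _ : Fin d => ℝ))) :=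
  have := Measure.pi_nullSingletonClass (μ := fun _ : Fin d => (volume : Measure ℝ)) 0
  (MeasurableEquiv.toLp p (Fin d → ℝ)).nullSingletonClass_map

instance PiLp.sigmaFinite_volume (p : ENNReal) (d : ℕ) :
    SigmaFinite (volume : Measure (PiLp p (fun _ : Fin d => ℝ))) :=
  (MeasurableEquiv.toLp p (Fin d → ℝ)).sigmaFinite_map

theorem MeasureTheory.Measure.ae_prod_fst_ne_snd {α : Type*} [MeasurableSpace α] [MeasurableEq α]
    (μ ν : Measure α) [SFinite ν] [NullSingletonClass ν] :
    ∀ᵐ z ∂μ.prod ν, z.1 ≠ z.2 := by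
  have hdiag : MeasurableSet (diagonal α)ᶜ := measurableSet_diagonal.compl
  refine (Measure.ae_prod_mem_iff_ae_ae_mem hdiag).2 (ae_of_all _ fun x => ?_)
  filter_upwards [ν.ae_ne x] with y hy using Ne.symm hy

theorem tendsto_integral_indicator_of_ae_eventually_notMem {α E : Type*} [MeasurableSpace α]
    [NormedAddCommGroup E] [NormedSpace ℝ E] {μ : Measure α} {F : α → E} (hF : Integrable F μ)
    {S : ℕ → Set α} (hS : ∀ n, MeasurableSet (S n)) (h : ∀ᵐ z ∂μ, ∀ᶠ n in atTop, z ∉ S n) :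
    Tendsto (fun n => ∫ z, (S n).indicator F z ∂μ) atTop (𝓝 0) := by
  have hlim : ∀ᵐ z ∂μ, Tendsto (fun n => (S n).indicator F z) atTop (𝓝 0) := by
    filter_upwards [h] with z hz
    exact tendsto_const_nhds.congr' (hz.mono fun n hn => (indicator_of_notMem hn F).symm)
  simpa using tendsto_integral_of_dominated_convergence (fun z => ‖F z‖)
    (fun n => hF.aestronglyMeasurable.indicator (hS n)) hF.norm
    (fun n => ae_of_all _ (norm_indicator_le_norm_self F)) hlim

theorem tendsto_integral_integral_ite_dist_le {X E : Type*} [MetricSpace X]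
    [SecondCountableTopology X] [MeasurableSpace X] [BorelSpace X]
    [NormedAddCommGroup E] [NormedSpace ℝ E] {μ ν : Measure X} [SFinite μ] [SFinite ν]
    [NullSingletonClass ν] {F : X → X → E} (hF : Integrable (uncurry F) (μ.prod ν))
    {s : ℕ → X → X → ℝ} (hs_meas : ∀ n, Measurable (uncurry (s n)))
    (hs_lim : ∀ x y, Tendsto (fun n => s n x y) atTop (𝓝 0)) :
    Tendsto (fun n => ∫ x, ∫ y, (if dist x y ≤ s n x y then F x y else 0) ∂ν ∂μ)
      atTop (𝓝 0) := by
  set S : ℕ → Set (X × X) := fun n => {z | dist z.1 z.2 ≤ s n z.1 z.2}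
  have hS : ∀ n, MeasurableSet (S n) := fun n =>
    measurableSet_le (measurable_fst.dist measurable_snd) (hs_meas n)
  have hS_eventually : ∀ᵐ z ∂μ.prod ν, ∀ᶠ n in atTop, z ∉ S n := by
    filter_upwards [Measure.ae_prod_fst_ne_snd μ ν] with z hz
    filter_upwards [(hs_lim z.1 z.2).eventually_lt_const (dist_pos.2 hz)] with n hn
    exact not_le.2 hn
  refine (tendsto_integral_indicator_of_ae_eventually_notMem hF hS hS_eventually).congr fun n => ?_
  rw [integral_prod _ (hF.indicator (hS n))]
  rfl

theorem double_integral_tendsto_zero_general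
    (d : ℕ) (hd : 1 ≤ d) (p : ENNReal) [Fact (1 ≤ p)]
    (f : PiLp p (fun _ : Fin d => ℝ) → ℝ)
    (hf_int : Integrable f)
    (r : ℕ → PiLp p (fun _ : Fin d => ℝ) → ℝ)
    (hr_meas : ∀ n, Measurable (r n))
    (hr_lim : ∀ x, Tendsto (fun n => r n x) atTop (nhds 0)) :
    Tendsto
      (fun n : ℕ => ∫ x, ∫ y,
        (if dist x y ≤ 3 * max (r n x) (r n y) then f x * f y else 0))
      atTop (nhds 0) := by
  have : NeZero d := ⟨by omega⟩
  refine tendsto_integral_integral_ite_dist_le (hf_int.mul_prod hf_int)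
    (fun n => (((hr_meas n).comp measurable_fst).max ((hr_meas n).comp measurable_snd)).const_mul 3)
    fun x y => ?_
  simpa using ((hr_lim x).max (hr_lim y)).const_mul 3

/-- if `r_n(x) → 0` pointwise, then
`∫∫ f(x) f(y) 1{‖x−y‖ ≤ 3 max(r_n(x), r_n(y))} dy dx → 0`. -/
theorem double_integral_tendsto_zero
    (d : ℕ) (hd : 1 ≤ d) (p : ENNReal) [Fact (1 ≤ p)]
    (f : PiLp p (fun _ : Fin d => ℝ) → ℝ)
    (hf_meas : Measurable f) (hf_nonneg : ∀ x, 0 ≤ f x)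
    (hf_int : Integrable f) (hf_prob : ∫ y, f y = 1)
    (r : ℕ → PiLp p (fun _ : Fin d => ℝ) → ℝ)
    (hr_meas : ∀ n, Measurable (r n)) (hr_nonneg : ∀ n x, 0 ≤ r n x)
    (hr_lim : ∀ x, Tendsto (fun n => r n x) atTop (nhds 0)) :
    Tendsto
      (fun n : ℕ => ∫ x, ∫ y,
        (if dist x y ≤ 3 * max (r n x) (r n y) then f x * f y else 0))
      atTop (nhds 0) :=
  double_integral_tendsto_zero_general d hd p f hf_int r hr_meas hr_lim
end
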